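/- arXiv:1308.1652 — 4 statements merged into one kernel-verified Lean document; each statement's English description precedes it below -/
import Mathlib

section
/- If n ≥ 3 is odd, then q(F_n) = (n + 2 + √((n-2)² + 8))/2. -/
open SimpleGraph

/-- The signless Laplacian matrix `Q(G) = D(G) + A(G)` of a finite simple graph. -/
noncomputable def signlessLaplacian {V : Type*} [Fintype V] [DecidableEq V]
    (G : SimpleGraph V) : Matrix V V ℝ :=
  letI := Classical.decRel G.Adj
  Matrix.diagonal (fun v => (G.degree v : ℝ)) + G.adjMatrix ℝ

/-- The `Q`-index of a graph: the largest eigenvalue of its signless Laplacian. -/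
noncomputable def qIndex {V : Type*} [Fintype V] [DecidableEq V]
    (G : SimpleGraph V) : ℝ :=
  sSup (spectrum ℝ (signlessLaplacian G))

/-- `H` is contained in `G` as a (not necessarily induced) subgraph. -/
def ContainsCopy {α β : Type*} (H : SimpleGraph α) (G : SimpleGraph β) : Prop :=
  ∃ f : α ↪ β, ∀ ⦃a b⦄, H.Adj a b → G.Adj (f a) (f b)

/-- The friendship-type graph `F_n`: vertex `0` is dominating; the remaining
vertices are paired `(1,2), (3,4), …`; for even `n` the last vertex is a pendant. -/
def friendshipGraph (n : ℕ) : SimpleGraph (Fin n) where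
  Adj i j := i ≠ j ∧ (i.val = 0 ∨ j.val = 0 ∨ (i.val + 1) / 2 = (j.val + 1) / 2)
  symm := by
    constructor
    intro i j ⟨h1, h2⟩
    exact ⟨h1.symm, by tauto⟩
  loopless := by
    constructor
    intro i ⟨h1, _⟩
    exact h1 rfl

/-- The graph `S_{n,k} = K_k ∨ \overline{K}_{n-k}`: the first `k` vertices form a
complete graph joined to an independent set on the remaining `n - k` vertices. -/
def sGraph (n k : ℕ) : SimpleGraph (Fin n) where
  Adj i j := i ≠ j ∧ (i.val < k ∨ j.val < k)
  symm := by
    constructor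
    intro i j ⟨h1, h2⟩
    exact ⟨h1.symm, h2.symm⟩
  loopless := by
    constructor
    intro i ⟨h1, _⟩
    exact h1 rfl

/-- The number of edges of `G` with one endpoint in `X` and the other in `Y`
(counted as ordered pairs in `X × Y`; for disjoint `X`, `Y` this is `e(X,Y)`). -/
noncomputable def edgesBetween {V : Type*} [Fintype V] [DecidableEq V]
    (G : SimpleGraph V) (X Y : Finset V) : ℕ :=
  letI := Classical.decRel G.Adj
  ((X ×ˢ Y).filter fun p => G.Adj p.1 p.2).card

/-- The number of edges of `G` with both endpoints in `X`. -/
noncomputable def edgesWithin {V : Type*} [Fintype V] [DecidableEq V]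
    (G : SimpleGraph V) (X : Finset V) : ℕ :=
  edgesBetween G X X / 2

/-!
The vector `x` with `x 0 = θ - 3` and `x j = 1` elsewhere is an eigenvector of `Q(F_n)` exactly
when `θ² - (n + 2) θ + 2 (n - 1) = 0`; the larger root `θ` exceeds `3`, so `x` is positive. For
a nonnegative matrix, the eigenvalue of a positive eigenvector bounds the modulus of every
eigenvalue (Collatz–Wielandt), hence `θ` is the largest eigenvalue.
-/

open Finset Matrix

theorem Matrix.mem_spectrum_iff_exists_mulVec_eq_smul {ι : Type*} [Fintype ι] [DecidableEq ι]
    {K : Type*} [Field K] (A : Matrix ι ι K) (μ : K) :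
    μ ∈ spectrum K A ↔ ∃ v : ι → K, v ≠ 0 ∧ A *ᵥ v = μ • v := by
  rw [← Matrix.spectrum_toLin', ← Module.End.hasEigenvalue_iff_mem_spectrum]
  constructor
  · intro h
    obtain ⟨v, hv⟩ := h.exists_hasEigenvector
    exact ⟨v, hv.2, by simpa using hv.apply_eq_smul⟩
  · rintro ⟨v, hv0, hv⟩
    exact Module.End.hasEigenvalue_of_hasEigenvector
      ⟨Module.End.mem_eigenspace_iff.mpr (by simpa using hv), hv0⟩

/-- Collatz–Wielandt: compare an eigenvector `v` with the positive one at a vertex where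
`|v i| / x i` is maximal. -/
theorem Matrix.abs_le_of_mulVec_eq_smul_of_pos {ι : Type*} [Fintype ι]
    {A : Matrix ι ι ℝ} (hA : ∀ i j, 0 ≤ A i j) {x : ι → ℝ} (hx : ∀ i, 0 < x i) {θ : ℝ}
    (hAx : A *ᵥ x = θ • x) {v : ι → ℝ} (hv : v ≠ 0) {μ : ℝ} (hAv : A *ᵥ v = μ • v) :
    |μ| ≤ θ := by
  obtain ⟨k, hk⟩ : ∃ k, v k ≠ 0 := by
    by_contra! h; exact hv (funext h)
  obtain ⟨i, -, hi⟩ := exists_max_image univ (fun j => |v j| / x j) ⟨k, mem_univ k⟩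
  set m := |v i| / x i
  have hvx : ∀ j, |v j| ≤ m * x j := fun j =>
    (div_le_iff₀ (hx j)).mp (hi j (mem_univ j))
  have hvi : 0 < |v i| := by
    have := hi k (mem_univ k)
    have : 0 < |v k| / x k := div_pos (abs_pos.mpr hk) (hx k)
    exact (div_pos_iff_of_pos_right (hx i)).mp (by linarith)
  have hmi : m * x i = |v i| := div_mul_cancel₀ _ (hx i).ne'
  have key : |μ| * |v i| ≤ θ * |v i| := calc
    |μ| * |v i| = |∑ j, A i j * v j| := by
        rw [← abs_mul, ← smul_eq_mul, ← Pi.smul_apply, ← hAv]; rfl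
    _ ≤ ∑ j, A i j * |v j| := by
        refine (abs_sum_le_sum_abs _ _).trans (le_of_eq ?_)
        simp_rw [abs_mul, abs_of_nonneg (hA i _)]
    _ ≤ ∑ j, A i j * (m * x j) := by
        gcongr with j
        · exact hA i j
        · exact hvx j
    _ = m * (θ * x i) := by
        have hθx : θ * x i = ∑ j, A i j * x j := by
          rw [← smul_eq_mul, ← Pi.smul_apply, ← hAx]; rfl
        rw [hθx, mul_sum]
        exact sum_congr rfl fun j _ => by ring
    _ = θ * |v i| := by rw [← hmi]; ring
  exact le_of_mul_le_mul_right key hvi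

theorem Matrix.csSup_spectrum_eq_of_pos_eigenvector {ι : Type*} [Fintype ι] [DecidableEq ι]
    [Nonempty ι] {A : Matrix ι ι ℝ} (hA : ∀ i j, 0 ≤ A i j) {x : ι → ℝ} (hx : ∀ i, 0 < x i)
    {θ : ℝ} (hAx : A *ᵥ x = θ • x) : sSup (spectrum ℝ A) = θ := by
  refine IsGreatest.csSup_eq ⟨?_, fun μ hμ => ?_⟩
  · refine (mem_spectrum_iff_exists_mulVec_eq_smul A θ).mpr ⟨x, fun h => ?_, hAx⟩
    exact (hx (Classical.arbitrary ι)).ne' (congrFun h _)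
  · obtain ⟨v, hv, hAv⟩ := (mem_spectrum_iff_exists_mulVec_eq_smul A μ).mp hμ
    exact (le_abs_self μ).trans (abs_le_of_mulVec_eq_smul_of_pos hA hx hAx hv hAv)

namespace SimpleGraph

variable {V : Type*} [Fintype V] [DecidableEq V] (G : SimpleGraph V)

theorem signlessLaplacian_apply_nonneg (i j : V) : 0 ≤ signlessLaplacian G i j := by
  unfold signlessLaplacian
  rw [Matrix.add_apply]
  exact add_nonneg (by by_cases h : i = j <;> simp [h]) (by by_cases h : G.Adj i j <;> simp [h])

theorem signlessLaplacian_mulVec_apply [DecidableRel G.Adj] (v : V → ℝ) (i : V) :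
    (signlessLaplacian G *ᵥ v) i = G.degree i * v i + ∑ j ∈ G.neighborFinset i, v j := by
  unfold signlessLaplacian
  rw [Matrix.add_mulVec, Pi.add_apply, Matrix.mulVec_diagonal, adjMatrix_mulVec_apply]
  congr!

theorem signlessLaplacian_mulVec_of_isUniversal_of_degree_eq_two [DecidableRel G.Adj] {c : V}
    (hc : G.IsUniversal c) (hdeg : ∀ j, j ≠ c → G.degree j = 2) {θ : ℝ}
    (hθ : θ ^ 2 - (Fintype.card V + 2) * θ + 2 * (Fintype.card V - 1) = 0) :
    signlessLaplacian G *ᵥ (fun j => if j = c then θ - 3 else 1)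
      = θ • fun j => if j = c then θ - 3 else 1 := by
  ext i
  rw [signlessLaplacian_mulVec_apply, Pi.smul_apply, smul_eq_mul]
  by_cases hi : i = c
  · subst hi
    have hN : G.neighborFinset i = univ.erase i := (G.neighborFinset_eq_erase_univ i).mpr hc
    have hcard : 1 ≤ Fintype.card V := Fintype.card_pos_iff.mpr ⟨i⟩
    rw [← card_neighborFinset_eq_degree, hN, sum_congr rfl fun j hj => if_neg (ne_of_mem_erase hj),
      sum_const, card_erase_of_mem (mem_univ i), card_univ, if_pos rfl, nsmul_eq_mul,
      Nat.cast_sub hcard, Nat.cast_one]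
    linear_combination -hθ
  · have hcN : c ∈ G.neighborFinset i := (mem_neighborFinset G i c).mpr (hc (Ne.symm hi)).symm
    rw [← add_sum_erase _ _ hcN, if_pos rfl, if_neg hi,
      sum_congr rfl fun j hj => if_neg (ne_of_mem_erase hj), sum_const, card_erase_of_mem hcN,
      card_neighborFinset_eq_degree, hdeg i hi]
    simp only [nsmul_eq_mul, Nat.cast_ofNat, Nat.add_one_sub_one, Nat.cast_one]
    ring

end SimpleGraph

instance (n : ℕ) : DecidableRel (friendshipGraph n).Adj :=
  fun i j => inferInstanceAs (Decidable (i ≠ j ∧ _))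

theorem friendshipGraph_isUniversal_zero {n : ℕ} (hn : 0 < n) :
    (friendshipGraph n).IsUniversal ⟨0, hn⟩ :=
  fun _ h => ⟨h, Or.inl rfl⟩

theorem friendshipGraph_degree_eq_two {n : ℕ} (hodd : Odd n) {i : Fin n} (hi : i.val ≠ 0) :
    (friendshipGraph n).degree i = 2 := by
  have hn : 0 < n := hodd.pos
  obtain ⟨p, hp0, hp⟩ : ∃ p : Fin n, p.val ≠ 0 ∧
      ∀ j : Fin n, (friendshipGraph n).Adj i j ↔ j.val = 0 ∨ j = p := by
    obtain ⟨k, rfl⟩ := hodd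
    rcases Nat.even_or_odd' i.val with ⟨l, hl | hl⟩
    · refine ⟨⟨2 * l - 1, by omega⟩, by simp; omega, fun j => ?_⟩
      simp only [friendshipGraph, Fin.ext_iff]
      omega
    · refine ⟨⟨2 * l + 2, by omega⟩, by simp, fun j => ?_⟩
      simp only [friendshipGraph, Fin.ext_iff]
      omega
  rw [← card_neighborFinset_eq_degree, card_eq_two]
  refine ⟨⟨0, hn⟩, p, fun h => hp0 (congrArg Fin.val h).symm, ?_⟩
  ext j
  simp [hp, Fin.ext_iff]

/-- For odd `n ≥ 3`, `q(F_n) = (n + 2 + √((n-2)² + 8)) / 2`. -/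
theorem stmt_1 (n : ℕ) (hn : 3 ≤ n) (hodd : Odd n) :
    qIndex (friendshipGraph n)
      = ((n : ℝ) + 2 + Real.sqrt (((n : ℝ) - 2) ^ 2 + 8)) / 2 := by
  set θ := ((n : ℝ) + 2 + Real.sqrt (((n : ℝ) - 2) ^ 2 + 8)) / 2 with hθdef
  have hs := Real.sq_sqrt (by positivity : 0 ≤ ((n : ℝ) - 2) ^ 2 + 8)
  have hθ : θ ^ 2 - (Fintype.card (Fin n) + 2) * θ + 2 * (Fintype.card (Fin n) - 1) = 0 := by
    rw [Fintype.card_fin]; linear_combination hs / 4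
  have hθ3 : 3 < θ := by
    have hn' : (3 : ℝ) ≤ n := by exact_mod_cast hn
    have : (3 : ℝ) ≤ √(((n : ℝ) - 2) ^ 2 + 8) := Real.le_sqrt_of_sq_le (by nlinarith)
    linarith
  have hpos : ∀ j : Fin n, 0 < if j = ⟨0, by omega⟩ then θ - 3 else 1 := fun j => by
    split_ifs <;> linarith
  have : Nonempty (Fin n) := ⟨⟨0, by omega⟩⟩
  exact Matrix.csSup_spectrum_eq_of_pos_eigenvector (signlessLaplacian_apply_nonneg _) hpos
    (signlessLaplacian_mulVec_of_isUniversal_of_degree_eq_two _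
      (friendshipGraph_isUniversal_zero (by omega))
      (fun j hj => friendshipGraph_degree_eq_two hodd fun h => hj (Fin.ext h)) hθ)
end

section
/- Let G be a simple graph of order n ≥ 4 containing no cycle of length 4 as a subgraph. If G has a vertex u adjacent to all other vertices, then the subgraph of G induced on V(G) \ {u} has maximum degree at most 1; consequently q(G) ≤ q(F_n). -/
open SimpleGraph

/-!
Since `u` is adjacent to every vertex, a vertex `v ≠ u` with two neighbours `w ≠ x` other than
`u` closes the 4-cycle `u w v x`. Hence `G - u` is a partial matching, and labelling `u` by `0`
and the other vertices by `1, 2, …` so that matched vertices receive labels `2k + 1, 2k + 2`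
exhibits `G` as a subgraph of a relabelled `F_n`. Finally `q` is monotone under taking subgraphs:
for an eigenvector `x` of `Q(G)` for `q(G)`,
`q(G) ‖x‖² = xᵀ Q(G) x ≤ |x|ᵀ Q(G) |x| ≤ |x|ᵀ Q(H) |x| ≤ q(H) ‖x‖²`, since `Q(G)` is entrywise
nonnegative and entrywise dominated by `Q(H)`.
-/

open Matrix
open scoped MatrixOrder

namespace Matrix

variable {V : Type*} [Fintype V] {A B : Matrix V V ℝ}

lemma IsHermitian.sSup_spectrum_mem [DecidableEq V] [Nonempty V] (hA : A.IsHermitian) :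
    sSup (spectrum ℝ A) ∈ spectrum ℝ A := by
  rw [hA.spectrum_real_eq_range_eigenvalues]
  exact (Set.range_nonempty _).csSup_mem (Set.finite_range _)

lemma IsHermitian.dotProduct_mulVec_le_sSup_spectrum [DecidableEq V] (hA : A.IsHermitian)
    (x : V → ℝ) : x ⬝ᵥ (A *ᵥ x) ≤ sSup (spectrum ℝ A) * (x ⬝ᵥ x) := by
  have hle : A ≤ algebraMap ℝ (Matrix V V ℝ) (sSup (spectrum ℝ A)) :=
    le_algebraMap_of_spectrum_le (fun μ hμ => le_csSup A.finite_real_spectrum.bddAbove hμ)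
      hA.isSelfAdjoint
  have := (le_iff.mp hle).dotProduct_mulVec_nonneg x
  simp only [Algebra.algebraMap_eq_smul_one, sub_mulVec, smul_mulVec, one_mulVec,
    dotProduct_sub, dotProduct_smul, star_trivial, smul_eq_mul] at this
  linarith

lemma dotProduct_mulVec_le_abs (hA : ∀ i j, 0 ≤ A i j) (hAB : ∀ i j, A i j ≤ B i j) (x : V → ℝ) :
    x ⬝ᵥ (A *ᵥ x) ≤ |x| ⬝ᵥ (B *ᵥ |x|) := by
  simp only [dotProduct, mulVec, Finset.mul_sum, Pi.abs_apply]
  refine Finset.sum_le_sum fun i _ => Finset.sum_le_sum fun j _ => ?_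
  calc x i * (A i j * x j) ≤ |x i * (A i j * x j)| := le_abs_self _
    _ = |x i| * (A i j * |x j|) := by rw [abs_mul, abs_mul, abs_of_nonneg (hA i j)]
    _ ≤ |x i| * (B i j * |x j|) := by gcongr; exact hAB i j

lemma IsHermitian.sSup_spectrum_le_of_nonneg_of_le [DecidableEq V] [Nonempty V]
    (hA : A.IsHermitian) (hB : B.IsHermitian) (hA0 : ∀ i j, 0 ≤ A i j)
    (hAB : ∀ i j, A i j ≤ B i j) :
    sSup (spectrum ℝ A) ≤ sSup (spectrum ℝ B) := by
  obtain ⟨x, hx⟩ := (Module.End.HasEigenvalue.of_mem_spectrum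
    ((spectrum_toLin' A).symm ▸ hA.sSup_spectrum_mem)).exists_hasEigenvector
  have hAx : A *ᵥ x = sSup (spectrum ℝ A) • x := by
    simpa using hx.apply_eq_smul
  have hxx : 0 < x ⬝ᵥ x := (dotProduct_self_star_pos_iff.mpr hx.2).trans_eq (by rw [star_trivial])
  have habs : |x| ⬝ᵥ |x| = x ⬝ᵥ x := by simp [dotProduct, abs_mul_abs_self]
  have hle := (dotProduct_mulVec_le_abs hA0 hAB x).trans
    (hB.dotProduct_mulVec_le_sSup_spectrum |x|)
  rw [hAx, dotProduct_smul, smul_eq_mul, habs] at hle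
  exact le_of_mul_le_mul_right hle hxx

end Matrix

namespace SimpleGraph

section QIndex

variable {V W : Type*} [Fintype V] [DecidableEq V] [Fintype W] [DecidableEq W]

lemma signlessLaplacian_isHermitian (G : SimpleGraph V) : (signlessLaplacian G).IsHermitian :=
  letI := Classical.decRel G.Adj
  (isHermitian_diagonal _).add (G.isSymm_adjMatrix (α := ℝ))

lemma signlessLaplacian_nonneg (G : SimpleGraph V) (i j : V) : 0 ≤ signlessLaplacian G i j := by
  classical
  simp only [signlessLaplacian, Matrix.add_apply, diagonal_apply, adjMatrix_apply]
  split_ifs <;> positivity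

lemma signlessLaplacian_le_of_le {G H : SimpleGraph V} (h : G ≤ H) (i j : V) :
    signlessLaplacian G i j ≤ signlessLaplacian H i j := by
  classical
  by_cases hij : i = j
  · subst hij
    simpa [signlessLaplacian] using G.degree_le_of_le h
  · simp only [signlessLaplacian, Matrix.add_apply, diagonal_apply_ne _ hij, zero_add,
      adjMatrix_apply]
    split_ifs with hG hH <;> first | exact absurd (h hG) hH | norm_num

lemma qIndex_mono [Nonempty V] {G H : SimpleGraph V} (h : G ≤ H) : qIndex G ≤ qIndex H :=
  (signlessLaplacian_isHermitian G).sSup_spectrum_le_of_nonneg_of_le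
    (signlessLaplacian_isHermitian H) (signlessLaplacian_nonneg G) (signlessLaplacian_le_of_le h)

lemma Iso.submatrix_signlessLaplacian {G : SimpleGraph V} {H : SimpleGraph W} (f : G ≃g H) :
    (signlessLaplacian H).submatrix f f = signlessLaplacian G := by
  classical
  ext i j
  by_cases hij : i = j
  · subst hij; simp [signlessLaplacian]
  · simp only [signlessLaplacian, submatrix_apply, Matrix.add_apply, adjMatrix_apply,
      diagonal_apply_ne _ hij, diagonal_apply_ne _ (f.injective.ne hij), f.map_adj_iff]

lemma Iso.qIndex_eq {G : SimpleGraph V} {H : SimpleGraph W} (f : G ≃g H) :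
    qIndex G = qIndex H := by
  rw [qIndex, qIndex, ← f.submatrix_signlessLaplacian]
  exact congrArg sSup
    (AlgEquiv.spectrum_eq (reindexAlgEquiv ℝ ℝ f.toEquiv.symm) (signlessLaplacian H))

lemma qIndex_le_of_le_comap [Nonempty V] {G : SimpleGraph V} {H : SimpleGraph W} (e : V ≃ W)
    (h : G ≤ H.comap e) : qIndex G ≤ qIndex H :=
  (qIndex_mono h).trans_eq (Iso.comap e H).qIndex_eq

end QIndex

section CycleFour

variable {V : Type*} {G : SimpleGraph V}

lemma containsCopy_cycleGraph_four {a b c d : V} (hab : G.Adj a b) (hbc : G.Adj b c)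
    (hcd : G.Adj c d) (hda : G.Adj d a) (hac : a ≠ c) (hbd : b ≠ d) :
    ContainsCopy (cycleGraph 4) G := by
  refine ⟨⟨![a, b, c, d], fun i j hij => ?_⟩, fun i j hij => ?_⟩
  · fin_cases i <;> fin_cases j <;>
      simp_all [hab.ne, hbc.ne, hcd.ne, hda.ne, hab.ne.symm, hbc.ne.symm, hcd.ne.symm,
        hda.ne.symm, hac.symm, hbd.symm]
  · change G.Adj (![a, b, c, d] i) (![a, b, c, d] j)
    fin_cases i <;> fin_cases j <;>
      first
        | exact absurd hij (by decide)
        | simp [hab, hbc, hcd, hda, hab.symm, hbc.symm, hcd.symm, hda.symm]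

lemma IsUniversal.eq_of_adj_of_adj {u v w x : V} (hu : G.IsUniversal u)
    (hC4 : ¬ ContainsCopy (cycleGraph 4) G) (hv : v ≠ u) (hw : w ≠ u) (hx : x ≠ u) (hvw : G.Adj v w)
    (hvx : G.Adj v x) : w = x := by
  by_contra hwx
  exact hC4 <|
    containsCopy_cycleGraph_four (hu hw.symm) hvw.symm hvx (hu hx.symm).symm hv.symm hwx

end CycleFour

section PairedLabelling

open Finset

variable {V : Type*} [DecidableEq V] {G : SimpleGraph V}

def IsPairedLabelling (G : SimpleGraph V) (s : Finset V) (f : V → ℕ) : Prop :=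
  Set.InjOn f s ∧ (∀ v ∈ s, f v < #s) ∧ ∀ v ∈ s, ∀ w ∈ s, G.Adj v w → f v / 2 = f w / 2

lemma IsPairedLabelling.of_erase_erase {s : Finset V} {v w : V} {g : V → ℕ} (hv : v ∈ s)
    (hw : w ∈ s) (hvw : G.Adj v w) (hv_nbr : ∀ y ∈ (s.erase v).erase w, ¬ G.Adj v y)
    (hw_nbr : ∀ y ∈ (s.erase v).erase w, ¬ G.Adj w y)
    (hg : G.IsPairedLabelling ((s.erase v).erase w) g) :
    G.IsPairedLabelling s fun x => if x = v then 0 else if x = w then 1 else g x + 2 := by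
  obtain ⟨hg_inj, hg_lt, hg_adj⟩ := hg
  set t := (s.erase v).erase w
  set f := fun x => if x = v then 0 else if x = w then 1 else g x + 2
  have hwv : w ∈ s.erase v := mem_erase.mpr ⟨hvw.ne', hw⟩
  have hcard : #t + 2 = #s := by
    have := card_pos.mpr ⟨w, hwv⟩
    rw [card_erase_of_mem hwv, card_erase_of_mem hv] at *
    omega
  have hval : ∀ x ∈ s, (x = v ∧ f x = 0) ∨ (x = w ∧ f x = 1) ∨ (x ∈ t ∧ f x = g x + 2) := by
    intro x hx
    by_cases hxv : x = v
    · simp [f, hxv]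
    by_cases hxw : x = w
    · simp [f, hxw, hvw.ne']
    · exact .inr (.inr ⟨mem_erase.mpr ⟨hxw, mem_erase.mpr ⟨hxv, hx⟩⟩, by simp [f, hxv, hxw]⟩)
  refine ⟨fun x hx y hy hxy => ?_, fun x hx => ?_, fun x hx y hy hxy => ?_⟩
  · rcases hval x hx with ⟨rfl, hfx⟩ | ⟨rfl, hfx⟩ | ⟨hxt, hfx⟩ <;>
      rcases hval y hy with ⟨rfl, hfy⟩ | ⟨rfl, hfy⟩ | ⟨hyt, hfy⟩ <;>
      first | rfl | omega | exact hg_inj hxt hyt (by omega)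
  · rcases hval x hx with ⟨-, hfx⟩ | ⟨-, hfx⟩ | ⟨hxt, hfx⟩
    · omega
    · omega
    · have := hg_lt x hxt; omega
  · rcases hval x hx with ⟨rfl, hfx⟩ | ⟨rfl, hfx⟩ | ⟨hxt, hfx⟩ <;>
      rcases hval y hy with ⟨rfl, hfy⟩ | ⟨rfl, hfy⟩ | ⟨hyt, hfy⟩
    all_goals first
      | rfl
      | omega
      | exact absurd hxy (hv_nbr _ ‹_›)
      | exact absurd hxy.symm (hv_nbr _ ‹_›)
      | exact absurd hxy (hw_nbr _ ‹_›)
      | exact absurd hxy.symm (hw_nbr _ ‹_›)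
      | (have := hg_adj x hxt y hyt hxy; omega)

lemma IsPairedLabelling.of_erase {s : Finset V} {v : V} {g : V → ℕ} (hv : v ∈ s)
    (hv_nbr : ∀ y ∈ s, ¬ G.Adj v y) (hg : G.IsPairedLabelling (s.erase v) g) :
    G.IsPairedLabelling s fun x => if x = v then #(s.erase v) else g x := by
  obtain ⟨hg_inj, hg_lt, hg_adj⟩ := hg
  set t := s.erase v
  set f := fun x => if x = v then #t else g x
  have hcard : #t + 1 = #s := card_erase_add_one hv
  have hval : ∀ x ∈ s, (x = v ∧ f x = #t) ∨ (x ∈ t ∧ f x = g x) := by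
    intro x hx
    by_cases hxv : x = v
    · simp [f, hxv]
    · exact .inr ⟨mem_erase.mpr ⟨hxv, hx⟩, by simp [f, hxv]⟩
  refine ⟨fun x hx y hy hxy => ?_, fun x hx => ?_, fun x hx y hy hxy => ?_⟩
  · rcases hval x hx with ⟨rfl, hfx⟩ | ⟨hxt, hfx⟩ <;> rcases hval y hy with ⟨rfl, hfy⟩ | ⟨hyt, hfy⟩
    · rfl
    · have := hg_lt y hyt; omega
    · have := hg_lt x hxt; omega
    · exact hg_inj hxt hyt (by omega)
  · rcases hval x hx with ⟨-, hfx⟩ | ⟨hxt, hfx⟩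
    · omega
    · have := hg_lt x hxt; omega
  · rcases hval x hx with ⟨rfl, -⟩ | ⟨hxt, hfx⟩
    · exact absurd hxy (hv_nbr y hy)
    rcases hval y hy with ⟨rfl, -⟩ | ⟨hyt, hfy⟩
    · exact absurd hxy.symm (hv_nbr x hx)
    · have := hg_adj x hxt y hyt hxy; omega

lemma exists_isPairedLabelling (s : Finset V)
    (hs : ∀ v ∈ s, ∀ w ∈ s, ∀ x ∈ s, G.Adj v w → G.Adj v x → w = x) :
    ∃ f, G.IsPairedLabelling s f := by
  induction s using Finset.strongInduction with
  | H s ih =>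
  obtain rfl | ⟨v, hv⟩ := s.eq_empty_or_nonempty
  · exact ⟨0, by simp [IsPairedLabelling]⟩
  have hrestrict : ∀ t ⊂ s, ∀ a ∈ t, ∀ b ∈ t, ∀ c ∈ t, G.Adj a b → G.Adj a c → b = c :=
    fun t hts a ha b hb c hc => hs a (hts.subset ha) b (hts.subset hb) c (hts.subset hc)
  by_cases hnbr : ∃ w ∈ s, G.Adj v w
  · obtain ⟨w, hw, hvw⟩ := hnbr
    have hts : (s.erase v).erase w ⊂ s :=
      (erase_ssubset (mem_erase.mpr ⟨hvw.ne', hw⟩)).trans (erase_ssubset hv)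
    obtain ⟨g, hg⟩ := ih _ hts (hrestrict _ hts)
    refine ⟨_, hg.of_erase_erase hv hw hvw (fun y hy hvy => ?_) (fun y hy hwy => ?_)⟩
    · exact ne_of_mem_erase hy (hs v hv w hw y (hts.subset hy) hvw hvy).symm
    · exact ne_of_mem_erase (mem_of_mem_erase hy)
        (hs w hw v hv y (hts.subset hy) hvw.symm hwy).symm
  · push Not at hnbr
    obtain ⟨g, hg⟩ := ih _ (erase_ssubset hv) (hrestrict _ (erase_ssubset hv))
    exact ⟨_, hg.of_erase hv hnbr⟩

variable [Fintype V]

lemma exists_le_comap_friendshipGraph (G : SimpleGraph V) (u : V)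
    (hG : ∀ v w x, v ≠ u → w ≠ u → x ≠ u → G.Adj v w → G.Adj v x → w = x) :
    ∃ e : V ≃ Fin (Fintype.card V), G ≤ (friendshipGraph _).comap e := by
  obtain ⟨f, hf_inj, hf_lt, hf_adj⟩ := exists_isPairedLabelling (G := G) (univ.erase u)
    fun v hv w hw x hx => hG v w x (ne_of_mem_erase hv) (ne_of_mem_erase hw) (ne_of_mem_erase hx)
  have hcard : #(univ.erase u) + 1 = Fintype.card V := card_erase_add_one (mem_univ u)
  have hmem : ∀ {v}, v ≠ u → v ∈ univ.erase u := fun hv => mem_erase.mpr ⟨hv, mem_univ _⟩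
  let e₀ : V → Fin (Fintype.card V) := fun v =>
    if hv : v = u then ⟨0, by omega⟩ else ⟨f v + 1, by have := hf_lt v (hmem hv); omega⟩
  have he₀ : Function.Injective e₀ := by
    intro a b hab
    rw [Fin.ext_iff] at hab
    by_cases ha : a = u <;> by_cases hb : b = u <;>
      simp only [e₀, ha, hb, dite_true, dite_false] at hab
    · exact ha.trans hb.symm
    · omega
    · omega
    · exact hf_inj (hmem ha) (hmem hb) (by omega)
  let e :=
    Equiv.ofBijective e₀ ((Fintype.bijective_iff_injective_and_card e₀).mpr ⟨he₀, by simp⟩)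
  refine ⟨e, fun a b hab => ⟨he₀.ne hab.ne, ?_⟩⟩
  by_cases ha : a = u
  · left; simp [e, e₀, ha]
  by_cases hb : b = u
  · right; left; simp [e, e₀, hb]
  · right; right
    have := hf_adj a (hmem ha) b (hmem hb) hab
    simp only [e, e₀, Equiv.ofBijective_apply, ha, hb, dite_false]
    omega

end PairedLabelling

end SimpleGraph

theorem stmt_10_general (n : ℕ) (G : SimpleGraph (Fin n))
    (hC4 : ¬ ContainsCopy (cycleGraph 4) G) (u : Fin n)
    (hu : ∀ v : Fin n, v ≠ u → G.Adj u v) :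
    (∀ v w x : Fin n, v ≠ u → w ≠ u → x ≠ u → w ≠ x →
        G.Adj v w → G.Adj v x → False) ∧
      qIndex G ≤ qIndex (friendshipGraph n) := by
  have hU : G.IsUniversal u := fun w h => hu w h.symm
  have hmatch : ∀ v w x : Fin n, v ≠ u → w ≠ u → x ≠ u → G.Adj v w → G.Adj v x → w = x :=
    fun v w x hv hw hx => hU.eq_of_adj_of_adj hC4 hv hw hx
  refine ⟨fun v w x hv hw hx hwx hvw hvx => hwx (hmatch v w x hv hw hx hvw hvx), ?_⟩
  have : Nonempty (Fin n) := ⟨u⟩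
  obtain ⟨e, he⟩ := exists_le_comap_friendshipGraph G u hmatch
  have hq := qIndex_le_of_le_comap e he
  rwa [Fintype.card_fin] at hq

/-- If `G` has order `n ≥ 4`, no `C₄` as a subgraph, and a vertex `u` adjacent to
all other vertices, then the subgraph induced on `V \ {u}` has maximum degree at
most `1` (no vertex outside `u` has two distinct neighbors outside `u`);
consequently `q(G) ≤ q(F_n)`. -/
theorem stmt_10 (n : ℕ) (hn : 4 ≤ n) (G : SimpleGraph (Fin n))
    (hC4 : ¬ ContainsCopy (cycleGraph 4) G) (u : Fin n)
    (hu : ∀ v : Fin n, v ≠ u → G.Adj u v) :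
    (∀ v w x : Fin n, v ≠ u → w ≠ u → x ≠ u → w ≠ x →
        G.Adj v w → G.Adj v x → False) ∧
      qIndex G ≤ qIndex (friendshipGraph n) :=
  stmt_10_general n G hC4 u hu
end

section
/- Let G be a simple graph containing no cycle of length 5 as a subgraph, let u be a vertex of G, and let x, y, z be three vertices in the neighborhood Γ(u) that form a triangle in G. Then every vertex w of G with w ∉ Γ(u) ∪ {u} is adjacent to at most one of the vertices x, y, z. -/
open SimpleGraph

/- A vertex `w` outside `Γ(u) ∪ {u}` adjacent to two vertices `x, y` of the triangle closes the
five-cycle `u x w y z` through the third vertex `z`. -/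

theorem containsCopy_cycleGraph_five {V : Type*} {G : SimpleGraph V} {a b c d e : V}
    (hab : G.Adj a b) (hbc : G.Adj b c) (hcd : G.Adj c d) (hde : G.Adj d e) (hea : G.Adj e a)
    (hac : a ≠ c) (hbd : b ≠ d) (hce : c ≠ e) (hda : d ≠ a) (heb : e ≠ b) :
    ContainsCopy (cycleGraph 5) G := by
  refine ⟨⟨![a, b, c, d, e], fun i j hij => ?_⟩, fun i j hij => ?_⟩
  · fin_cases i <;> fin_cases j <;> simp_all [hab.ne, hbc.ne, hcd.ne, hde.ne, hea.ne, eq_comm]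
  · change G.Adj (![a, b, c, d, e] i) (![a, b, c, d, e] j)
    fin_cases i <;> fin_cases j <;>
      first
        | exact absurd hij (by decide)
        | simp [hab, hbc, hcd, hde, hea, hab.symm, hbc.symm, hcd.symm, hde.symm, hea.symm]

theorem not_adj_and_adj_of_cycleGraph_five_free {V : Type*} {G : SimpleGraph V}
    (hC5 : ¬ ContainsCopy (cycleGraph 5) G) {u x y z w : V}
    (hux : G.Adj u x) (huz : G.Adj u z) (hyz : G.Adj y z)
    (hxy : x ≠ y) (hxz : x ≠ z) (huy : u ≠ y) (hwu : w ≠ u) (hwN : ¬ G.Adj u w) :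
    ¬ (G.Adj w x ∧ G.Adj w y) := by
  rintro ⟨hwx, hwy⟩
  have hwz : w ≠ z := by rintro rfl; exact hwN huz
  exact hC5 (containsCopy_cycleGraph_five hux hwx.symm hwy hyz huz.symm
    hwu.symm hxy hwz huy.symm hxz.symm)

/-- If `G` contains no `C₅` as a subgraph and `x, y, z ∈ Γ(u)` form a triangle,
then every vertex `w ∉ Γ(u) ∪ {u}` is adjacent to at most one of `x, y, z`. -/
theorem stmt_13 {V : Type*} (G : SimpleGraph V)
    (hC5 : ¬ ContainsCopy (cycleGraph 5) G) (u x y z : V)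
    (hux : G.Adj u x) (huy : G.Adj u y) (huz : G.Adj u z)
    (hxy : G.Adj x y) (hxz : G.Adj x z) (hyz : G.Adj y z)
    (w : V) (hwu : w ≠ u) (hwN : ¬ G.Adj u w) :
    ¬ (G.Adj w x ∧ G.Adj w y) ∧ ¬ (G.Adj w x ∧ G.Adj w z) ∧
      ¬ (G.Adj w y ∧ G.Adj w z) :=
  ⟨not_adj_and_adj_of_cycleGraph_five_free hC5 hux huz hyz hxy.ne hxz.ne huy.ne hwu hwN,
    not_adj_and_adj_of_cycleGraph_five_free hC5 hux huy hyz.symm hxz.ne hxy.ne huz.ne hwu hwN,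
    not_adj_and_adj_of_cycleGraph_five_free hC5 huy hux hxz.symm hyz.ne hxy.ne.symm huz.ne hwu hwN⟩
end

section
/- Let G be a simple graph of order n and let u be a vertex of G with degree d(u) ≥ 1. If d(u) + (1/d(u))·Σ_{v ∈ Γ(u)} d(v) ≥ n + 2 - 4/(n+1), then the number of edges of G inside the neighborhood Γ(u) satisfies e(Γ(u)) ≥ d(u) - 1. -/
open SimpleGraph

/-!
Each neighbour `v` of `u` has at most `n - d(u)` neighbours outside `Γ(u)`, so
`∑_{v ∈ Γ(u)} d(v) ≤ 2 e(Γ(u)) + d(u) (n - d(u))`. Inserting this into the hypothesis gives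
`2 e(Γ(u)) ≥ 2 d(u) - 4 d(u) / (n + 1) > 2 d(u) - 4`, and integrality yields `e(Γ(u)) ≥ d(u) - 1`.
-/

open Finset

lemma Finset.even_card_of_swap_mem {α : Type*} [DecidableEq α] {s : Finset (α × α)}
    (hswap : ∀ p ∈ s, p.swap ∈ s) (hdiag : ∀ p ∈ s, p.1 ≠ p.2) : Even #s := by
  rw [card_eq_sum_card_image (fun q : α × α => s(q.1, q.2)) s]
  refine even_sum _ fun z hz => ?_
  obtain ⟨p, hp, rfl⟩ := mem_image.mp hz
  have hfiber : {q ∈ s | s(q.1, q.2) = s(p.1, p.2)} = {p, p.swap} := by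
    ext q
    simp only [mem_filter, mem_insert, mem_singleton]
    constructor
    · exact fun h => Sym2.mk_eq_mk_iff.mp h.2
    · rintro (rfl | rfl)
      · exact ⟨hp, rfl⟩
      · exact ⟨hswap p hp, Sym2.eq_swap⟩
  rw [hfiber, card_pair fun h => hdiag p hp (congrArg Prod.fst h)]
  exact even_two

section

variable {V : Type*} [Fintype V] [DecidableEq V] (G : SimpleGraph V)

lemma edgesBetween_eq_card_interedges [DecidableRel G.Adj] (X Y : Finset V) :
    edgesBetween G X Y = #(G.interedges X Y) := by
  unfold edgesBetween
  rw [SimpleGraph.interedges_def]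
  congr 1
  exact filter_congr_decidable _ _ _

lemma edgesBetween_eq_sum_card_inter [DecidableRel G.Adj] (X Y : Finset V) :
    edgesBetween G X Y = ∑ x ∈ X, #(G.neighborFinset x ∩ Y) := by
  rw [edgesBetween_eq_card_interedges, SimpleGraph.interedges_def, card_filter, sum_product]
  refine sum_congr rfl fun x _ => ?_
  rw [← card_filter]
  congr 1
  ext w
  simp only [mem_filter, mem_inter, SimpleGraph.mem_neighborFinset, and_comm]

lemma even_edgesBetween_self (X : Finset V) : Even (edgesBetween G X X) := by
  classical
  rw [edgesBetween_eq_card_interedges]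
  refine even_card_of_swap_mem (fun p hp => ?_) fun p hp => ?_
  · exact G.swap_mem_interedges_iff.mpr hp
  · exact (G.mem_interedges_iff.mp hp).2.2.ne

lemma degree_le_card_inter_add_card_compl [DecidableRel G.Adj] (v : V) (X : Finset V) :
    G.degree v ≤ #(G.neighborFinset v ∩ X) + #Xᶜ := by
  rw [← G.card_neighborFinset_eq_degree, ← card_inter_add_card_sdiff _ X]
  exact Nat.add_le_add_left (card_le_card (sdiff_subset_sdiff (subset_univ _) le_rfl)) _

lemma sum_degree_le_edgesBetween_add [DecidableRel G.Adj] (X : Finset V) :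
    ∑ v ∈ X, G.degree v ≤ edgesBetween G X X + #X * (Fintype.card V - #X) := by
  rw [edgesBetween_eq_sum_card_inter, ← card_compl, ← smul_eq_mul, ← sum_const,
    ← sum_add_distrib]
  exact sum_le_sum fun v _ => degree_le_card_inter_add_card_compl G v X

end

/-- If `G` has order `n`, `u` is a vertex with `d(u) ≥ 1`, and
`d(u) + (1/d(u)) ∑_{v ∈ Γ(u)} d(v) ≥ n + 2 - 4/(n+1)`, then `e(Γ(u)) ≥ d(u) - 1`. -/
theorem stmt_16 (n : ℕ) (G : SimpleGraph (Fin n)) [DecidableRel G.Adj]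
    (u : Fin n) (hd : 1 ≤ G.degree u)
    (h : (n : ℝ) + 2 - 4 / ((n : ℝ) + 1) ≤
        (G.degree u : ℝ) +
          (1 / (G.degree u : ℝ)) * ∑ v ∈ G.neighborFinset u, (G.degree v : ℝ)) :
    G.degree u - 1 ≤ edgesWithin G (G.neighborFinset u) := by
  set d := G.degree u
  set S := ∑ v ∈ G.neighborFinset u, (G.degree v : ℝ)
  set P := edgesBetween G (G.neighborFinset u) (G.neighborFinset u)
  have hdn : d ≤ n := by simpa using (G.degree_lt_card_verts u).le
  have hS : S ≤ P + d * (n - d) := by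
    have := sum_degree_le_edgesBetween_add G (G.neighborFinset u)
    rw [G.card_neighborFinset_eq_degree, Fintype.card_fin] at this
    have := (Nat.cast_le (α := ℝ)).mpr this
    push_cast at this
    rwa [Nat.cast_sub hdn] at this
  have hP : (2 * d : ℝ) < P + 4 := by
    have hd0 : (0 : ℝ) < d := by exact_mod_cast hd
    have hmul : ((n : ℝ) + 2 - 4 / ((n : ℝ) + 1)) * d ≤ d * d + S := by
      have := mul_le_mul_of_nonneg_right h hd0.le
      rwa [add_mul, one_div_mul_eq_div, div_mul_cancel₀ _ hd0.ne'] at this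
    have hfrac : 4 / ((n : ℝ) + 1) * d < 4 := by
      rw [div_mul_eq_mul_div, div_lt_iff₀ (by positivity)]
      linarith [(Nat.cast_le (α := ℝ)).mpr hdn]
    linarith
  obtain ⟨r, hr⟩ := even_edgesBetween_self G (G.neighborFinset u)
  have : 2 * d < P + 4 := by exact_mod_cast hP
  unfold edgesWithin
  omega
end
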